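/- Let U : ℝ³ → M₂(ℂ) be differentiable with values in SU(2) and satisfy the odd (G-parity) reflection symmetry U(r x) = U(x)* for all x ∈ ℝ³. Then the baryon number density is even under the reflection: b(r x) = b(x) for all x ∈ ℝ³. -/

import Mathlib

/-!
Differentiating `U ∘ r = U*` at `e_i` gives `DU(r x)[e_i] = ε_i DU(x)[e_i]*` with
`ε = (1, 1, -1)`, and differentiating `U* U = 1` shows that the currents are skew-Hermitian.
Together these give `L_i(r x) = -ε_i U(x) L_i(x) U(x)*`. Conjugation by the unitary `U(x)`
leaves the traces of triple products unchanged, and `(-ε₁)(-ε₂)(-ε₃) = 1`, so `b(r x) = b(x)`.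
-/

open Matrix

attribute [local instance] Matrix.frobeniusNormedAddCommGroup Matrix.frobeniusNormedSpace

/-- Reflection of `ℝ³` across the plane `{x₃ = 0}`: `(x₁, x₂, x₃) ↦ (x₁, x₂, -x₃)`. -/
def reflPlane : (Fin 3 → ℝ) → (Fin 3 → ℝ) := fun x i => if i = 2 then -x i else x i

attribute [local instance] Matrix.frobeniusNormedRing Matrix.frobeniusNormedAlgebra

section StarValued

variable {E F : Type*} [NormedAddCommGroup E] [NormedSpace ℝ E]

theorem fderiv_apply_map_of_comp_eq_star [NormedAddCommGroup F] [NormedSpace ℝ F]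
    [StarAddMonoid F] [StarModule ℝ F] [ContinuousStar F] {f : E → F}
    (hf : Differentiable ℝ f) (R : E →L[ℝ] E) (h : ∀ x, f (R x) = star (f x)) (x v : E) :
    fderiv ℝ f (R x) (R v) = star (fderiv ℝ f x v) := by
  have hcomp : HasFDerivAt (fun y => star (f y)) ((fderiv ℝ f (R x)).comp R) x :=
    funext h ▸ (hf (R x)).hasFDerivAt.comp x R.hasFDerivAt
  rw [← ContinuousLinearMap.comp_apply, hcomp.unique (hf x).hasFDerivAt.star]
  rfl

theorem star_fderiv_mul_add_star_mul_fderiv_eq_zero [NormedRing F] [NormedAlgebra ℝ F]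
    [StarRing F] [StarModule ℝ F] [ContinuousStar F] {f : E → F} {x : E}
    (hf : DifferentiableAt ℝ f x) (h : ∀ y, star (f y) * f y = 1) (v : E) :
    star (fderiv ℝ f x v) * f x + star (f x) * fderiv ℝ f x v = 0 := by
  have hprod := hf.hasFDerivAt.star.mul' hf.hasFDerivAt
  rw [show (fun y => star (f y)) * f = fun _ => 1 from funext h] at hprod
  have := congrArg (· v) (hprod.unique (hasFDerivAt_const 1 x))
  simpa [add_comm] using this

end StarValued

theorem mul_smul_star_eq_neg_smul_conj {R : Type*} [Ring R] [StarRing R] [Algebra ℝ R]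
    {u d : R} (hu : u * star u = 1) (hd : star d * u + star u * d = 0) (c : ℝ) :
    u * (c • star d) = -c • (u * (star u * d) * star u) := by
  have hstar : star d = -(star u * d) * star u := by
    rw [← eq_neg_of_add_eq_zero_left hd, mul_assoc, hu, mul_one]
  rw [hstar, mul_smul_comm, neg_smul, ← smul_neg]
  noncomm_ring

def reflSign (i : Fin 3) : ℝ := if i = 2 then -1 else 1

theorem reflPlane_eq_mul (x : Fin 3 → ℝ) : reflPlane x = reflSign * x := by
  funext i
  simp only [reflPlane, reflSign, Pi.mul_apply]
  split_ifs <;> ring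

theorem reflPlane_reflPlane (x : Fin 3 → ℝ) : reflPlane (reflPlane x) = x := by
  funext i
  simp only [reflPlane]
  split_ifs <;> ring

theorem reflPlane_single (i : Fin 3) :
    reflPlane (Pi.single i 1) = reflSign i • (Pi.single i 1 : Fin 3 → ℝ) := by
  rw [reflPlane_eq_mul, ← Pi.single_mul_right, mul_one, ← Pi.single_smul', smul_eq_mul, mul_one]

theorem prod_reflSign : ∏ i, reflSign i = -1 := by
  simp [reflSign]

def baryonDensity {n : Type*} [Fintype n] (A : Fin 3 → Matrix n n ℂ) : ℝ :=
  ∑ σ : Equiv.Perm (Fin 3),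
    ((Equiv.Perm.sign σ : ℤ) : ℝ) * ((A (σ 0) * A (σ 1) * A (σ 2)).trace).re

theorem baryonDensity_smul_conj {n : Type*} [Fintype n] [DecidableEq n]
    (A : Fin 3 → Matrix n n ℂ) (c : Fin 3 → ℝ) {u : Matrix n n ℂ} (hu : star u * u = 1) :
    baryonDensity (fun i => c i • (u * A i * star u)) = (∏ i, c i) * baryonDensity A := by
  rw [baryonDensity, baryonDensity, Finset.mul_sum]
  refine Finset.sum_congr rfl fun σ _ => ?_
  have hprod : ∏ i, c (σ i) = ∏ i, c i := Equiv.prod_comp σ c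
  have hconj : (u * A (σ 0) * star u) * (u * A (σ 1) * star u) * (u * A (σ 2) * star u)
      = u * (A (σ 0) * A (σ 1) * A (σ 2)) * star u := by
    simp only [mul_assoc, ← mul_assoc (star u) u, hu, one_mul]
  have htrace : (u * (A (σ 0) * A (σ 1) * A (σ 2)) * star u).trace
      = (A (σ 0) * A (σ 1) * A (σ 2)).trace := by
    rw [trace_mul_cycle, hu, one_mul]
  rw [Fin.prod_univ_three] at hprod
  simp only [smul_mul_assoc, mul_smul_comm, smul_smul, hconj, trace_smul, htrace,
    Complex.smul_re, smul_eq_mul, ← hprod]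
  ring

theorem stmt17 (U : (Fin 3 → ℝ) → Matrix (Fin 2) (Fin 2) ℂ)
    (hSU : ∀ y, (U y)ᴴ * U y = 1 ∧ (U y).det = 1)
    (hdiff : Differentiable ℝ U)
    (L : (Fin 3 → ℝ) → Fin 3 → Matrix (Fin 2) (Fin 2) ℂ)
    (hL : ∀ y i, L y i = (U y)ᴴ * fderiv ℝ U y (Pi.single i 1))
    (b : (Fin 3 → ℝ) → ℝ)
    (hb : ∀ x, b x = ∑ σ : Equiv.Perm (Fin 3),
      ((Equiv.Perm.sign σ : ℤ) : ℝ) * ((L x (σ 0) * L x (σ 1) * L x (σ 2)).trace).re)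
    (hodd : ∀ x, U (reflPlane x) = (U x)ᴴ) :
    ∀ x, b (reflPlane x) = b x := by
  simp only [← star_eq_conjTranspose] at hSU hL hodd
  intro x
  have hunit : star (U x) * U x = 1 := (hSU x).1
  have hderiv (i : Fin 3) : fderiv ℝ U (reflPlane x) (Pi.single i 1)
      = reflSign i • star (fderiv ℝ U x (Pi.single i 1)) := by
    have h := fderiv_apply_map_of_comp_eq_star hdiff (ContinuousLinearMap.mul ℝ _ reflSign)
      (by simpa [← reflPlane_eq_mul] using hodd) x (reflPlane (Pi.single i 1))
    simp only [ContinuousLinearMap.mul_apply', ← reflPlane_eq_mul, reflPlane_reflPlane] at h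
    rwa [reflPlane_single, map_smul, star_smul, star_trivial] at h
  have hcurrent : L (reflPlane x) = fun i => (-reflSign i) • (U x * L x i * star (U x)) := by
    funext i
    rw [hL, hL, hodd, star_star, hderiv]
    exact mul_smul_star_eq_neg_smul_conj (mul_eq_one_comm.mp hunit)
      (star_fderiv_mul_add_star_mul_fderiv_eq_zero (hdiff x) (fun y => (hSU y).1) _) _
  have hsign : ∏ i, -reflSign i = 1 := by
    rw [Finset.prod_neg, prod_reflSign]; norm_num
  rw [hb, hb]
  change baryonDensity (L (reflPlane x)) = baryonDensity (L x)
  rw [hcurrent, baryonDensity_smul_conj _ _ hunit, hsign, one_mul]
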